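/- System W satisfies (SynSplit): for any consistent belief base with syntax splitting Δ = Δ1 ∪_{Σ1,Σ2} Δ2, both of the following hold. (Rel): for i = 1,2 and any formulas A, B over Σ_i, A |~_Δ^w B iff A |~_{Δ_i}^w B. (Ind): for i, j ∈ {1,2} with i ≠ j, any formulas A, B over Σ_i and any satisfiable formula D over Σ_j, A |~_Δ^w B iff A∧D |~_Δ^w B. -/
import Mathlib


open scoped Classical

namespace SysW

/-- Propositional formulas over a signature (set of atoms) `V`. -/
inductive PForm (V : Type) : Type
  | var (v : V)
  | tru
  | fls
  | neg (φ : PForm V)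
  | conj (φ ψ : PForm V)
  | disj (φ ψ : PForm V)

/-- Evaluation of a formula in a world `ω : V → Bool`. -/
def PForm.eval {V : Type} (ω : V → Bool) : PForm V → Bool
  | var v => ω v
  | tru => true
  | fls => false
  | neg φ => !(PForm.eval ω φ)
  | conj φ ψ => PForm.eval ω φ && PForm.eval ω ψ
  | disj φ ψ => PForm.eval ω φ || PForm.eval ω ψ

/-- The atoms occurring in a formula. -/
def PForm.vars {V : Type} : PForm V → Set V
  | var v => {v}
  | tru => ∅
  | fls => ∅
  | neg φ => PForm.vars φ
  | conj φ ψ => PForm.vars φ ∪ PForm.vars ψ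
  | disj φ ψ => PForm.vars φ ∪ PForm.vars ψ

/-- A conditional (B|A): "if `ante` then usually `cons`". -/
structure CondRule (V : Type) : Type where
  cons : PForm V
  ante : PForm V

/-- The atoms occurring in a conditional. -/
def condVars {V : Type} (r : CondRule V) : Set V := r.ante.vars ∪ r.cons.vars

/-- `ω` verifies (B|A) iff `ω ⊨ A ∧ B`. -/
def verifies {V : Type} (ω : V → Bool) (r : CondRule V) : Prop :=
  r.ante.eval ω = true ∧ r.cons.eval ω = true

/-- `ω` falsifies (B|A) iff `ω ⊨ A ∧ ¬B`. -/
def falsifies {V : Type} (ω : V → Bool) (r : CondRule V) : Prop :=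
  r.ante.eval ω = true ∧ r.cons.eval ω = false

/-- A conditional `r` is tolerated by a set of conditionals `S` if some world
verifies `r` and falsifies no conditional of `S`. -/
def Tolerated {V : Type} (S : Finset (CondRule V)) (r : CondRule V) : Prop :=
  ∃ ω : V → Bool, verifies ω r ∧ ∀ r' ∈ S, ¬ falsifies ω r'

/-- `rest Δ j` is what remains of `Δ` after removing the first `j` parts
`Δ^0, …, Δ^{j-1}` of the tolerance partition. -/
noncomputable def rest {V : Type} (Δ : Finset (CondRule V)) : ℕ → Finset (CondRule V)
  | 0 => Δ
  | j + 1 => (rest Δ j).filter (fun r => ¬ Tolerated (rest Δ j) r)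

/-- `part Δ j` is the part `Δ^j` of the inclusion-maximal tolerance partition of `Δ`:
the conditionals of `rest Δ j` tolerated by `rest Δ j`. -/
noncomputable def part {V : Type} (Δ : Finset (CondRule V)) (j : ℕ) : Finset (CondRule V) :=
  (rest Δ j).filter (fun r => Tolerated (rest Δ j) r)

/-- `Δ` is consistent iff the tolerance partitioning process exhausts `Δ`. -/
def Consistent {V : Type} (Δ : Finset (CondRule V)) : Prop :=
  ∃ n, rest Δ n = ∅

/-- The tolerance partition of `Δ` is `OP(Δ) = (Δ^0, …, Δ^k)`, i.e. the process
stops exactly after the part with index `k` (all parts `Δ^0, …, Δ^k` nonempty). -/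
def IsOPLength {V : Type} (Δ : Finset (CondRule V)) (k : ℕ) : Prop :=
  rest Δ (k + 1) = ∅ ∧ rest Δ k ≠ ∅

/-- `fpart Δ j ω` = `f_Δ^j(ω)`, the set of conditionals of `Δ^j` falsified by `ω`. -/
noncomputable def fpart {V : Type} (Δ : Finset (CondRule V)) (j : ℕ) (ω : V → Bool) :
    Finset (CondRule V) :=
  (part Δ j).filter (fun r => falsifies ω r)

/-- The preferred structure on worlds `ω ≺_Δ ω'`: there is `m` such that
`f_Δ^i(ω) = f_Δ^i(ω')` for all `i > m` and `f_Δ^m(ω) ⊊ f_Δ^m(ω')`.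
(For `i` beyond the last index `k` of the tolerance partition of a consistent `Δ`,
both sides are empty, so this agrees with the textbook definition.) -/
noncomputable def prefRel {V : Type} (Δ : Finset (CondRule V)) (ω ω' : V → Bool) : Prop :=
  ∃ m : ℕ, (∀ i, m < i → fpart Δ i ω = fpart Δ i ω') ∧ fpart Δ m ω ⊂ fpart Δ m ω'

/-- System W inference `A |~_Δ^w B`: for every world `ω' ⊨ A ∧ ¬B` there is a
world `ω ⊨ A ∧ B` with `ω ≺_Δ ω'`. -/
noncomputable def SysWInf {V : Type} (Δ : Finset (CondRule V)) (A B : PForm V) : Prop :=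
  ∀ ω' : V → Bool, A.eval ω' = true ∧ B.eval ω' = false →
    ∃ ω : V → Bool, (A.eval ω = true ∧ B.eval ω = true) ∧ prefRel Δ ω ω'

/-- `Δ = Δ1 ∪_{Sig1,Sig2} Δ2`: `{Sig1, Sig2}` is a partition of the signature, `{Δ1, Δ2}`
partitions `Δ`, and every conditional of `Δi` uses only atoms from `Σi`. -/
def SyntaxSplitting {V : Type} (Sig1 Sig2 : Set V) (Δ Δ1 Δ2 : Finset (CondRule V)) : Prop :=
  Sig1 ∪ Sig2 = Set.univ ∧ Disjoint Sig1 Sig2 ∧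
  Δ = Δ1 ∪ Δ2 ∧ Disjoint Δ1 Δ2 ∧
  (∀ r ∈ Δ1, condVars r ⊆ Sig1) ∧ (∀ r ∈ Δ2, condVars r ⊆ Sig2)

-- ### auxiliary lemmas

variable {V : Type}

lemma eval_congr {ω ω' : V → Bool} (φ : PForm V) (h : ∀ v ∈ φ.vars, ω v = ω' v) :
    φ.eval ω = φ.eval ω' := by
  induction φ with
  | var v => exact h v rfl
  | tru => rfl
  | fls => rfl
  | neg φ ih => simp only [PForm.eval]; rw [ih h]
  | conj φ ψ ih1 ih2 =>
      simp only [PForm.eval]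
      rw [ih1 (fun v hv => h v (Or.inl hv)), ih2 (fun v hv => h v (Or.inr hv))]
  | disj φ ψ ih1 ih2 =>
      simp only [PForm.eval]
      rw [ih1 (fun v hv => h v (Or.inl hv)), ih2 (fun v hv => h v (Or.inr hv))]

lemma eval_congr_subset {ω ω' : V → Bool} {S : Set V} (φ : PForm V) (hφ : φ.vars ⊆ S)
    (h : ∀ v ∈ S, ω v = ω' v) : φ.eval ω = φ.eval ω' :=
  eval_congr φ (fun v hv => h v (hφ hv))

lemma falsifies_congr {ω ω' : V → Bool} {S : Set V} {r : CondRule V} (hr : condVars r ⊆ S)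
    (h : ∀ v ∈ S, ω v = ω' v) : falsifies ω r ↔ falsifies ω' r := by
  unfold falsifies
  rw [eval_congr_subset r.ante (fun v hv => hr (Or.inl hv)) h,
      eval_congr_subset r.cons (fun v hv => hr (Or.inr hv)) h]

lemma verifies_congr {ω ω' : V → Bool} {S : Set V} {r : CondRule V} (hr : condVars r ⊆ S)
    (h : ∀ v ∈ S, ω v = ω' v) : verifies ω r ↔ verifies ω' r := by
  unfold verifies
  rw [eval_congr_subset r.ante (fun v hv => hr (Or.inl hv)) h,
      eval_congr_subset r.cons (fun v hv => hr (Or.inr hv)) h]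

/-- combine two worlds along a set -/
noncomputable def combine (Sig1 : Set V) (ω1 ω2 : V → Bool) : V → Bool :=
  fun v => if v ∈ Sig1 then ω1 v else ω2 v

lemma combine_agree_left (Sig1 : Set V) (ω1 ω2 : V → Bool) :
    ∀ v ∈ Sig1, combine Sig1 ω1 ω2 v = ω1 v := fun v hv => if_pos hv

lemma combine_agree_right {Sig1 Sig2 : Set V} (hd : Disjoint Sig1 Sig2) (ω1 ω2 : V → Bool) :
    ∀ v ∈ Sig2, combine Sig1 ω1 ω2 v = ω2 v := fun v hv =>
  if_neg (fun h1 => (Set.disjoint_left.mp hd h1) hv)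

lemma rest_subset (Δ : Finset (CondRule V)) : ∀ j, rest Δ j ⊆ Δ
  | 0 => subset_rfl
  | j + 1 => (Finset.filter_subset _ _).trans (rest_subset Δ j)

lemma rest_succ_subset (Δ : Finset (CondRule V)) (j : ℕ) : rest Δ (j+1) ⊆ rest Δ j :=
  Finset.filter_subset _ _

lemma rest_antitone (Δ : Finset (CondRule V)) {j k : ℕ} (h : j ≤ k) : rest Δ k ⊆ rest Δ j := by
  induction k with
  | zero => simp at h; subst h; exact subset_rfl
  | succ k ih =>
      rcases Nat.lt_or_ge j (k+1) with h' | h'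
      · exact (rest_succ_subset Δ k).trans (ih (Nat.lt_succ_iff.mp h'))
      · have : j = k + 1 := le_antisymm h h'
        subst this; exact subset_rfl

lemma exists_nonfalsifying {Δ : Finset (CondRule V)} (hcons : Consistent Δ) (j : ℕ) :
    ∃ ω : V → Bool, ∀ r ∈ rest Δ j, ¬ falsifies ω r := by
  by_cases h : rest Δ j = ∅
  · exact ⟨fun _ => true, by simp [h]⟩
  · -- some rule of `rest Δ j` is tolerated, else the process stalls
    by_cases htol : ∃ r ∈ rest Δ j, Tolerated (rest Δ j) r
    · obtain ⟨r, _, ω, _, hω⟩ := htol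
      exact ⟨ω, hω⟩
    · exfalso
      push_neg at htol
      have hstall : rest Δ (j+1) = rest Δ j := by
        show (rest Δ j).filter _ = rest Δ j
        rw [Finset.filter_true_of_mem (fun r hr => htol r hr)]
      have hconst : ∀ n, rest Δ (j + n) = rest Δ j := by
        intro n
        induction n with
        | zero => rfl
        | succ n ih =>
            have : j + (n+1) = (j + n) + 1 := rfl
            rw [this]
            show (rest Δ (j+n)).filter _ = _
            rw [ih]
            exact hstall
      obtain ⟨N, hN⟩ := hcons
      rcases Nat.le_total N j with hle | hle
      · exact h (Finset.subset_empty.mp (hN ▸ rest_antitone Δ hle))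
      · have := hconst (N - j)
        rw [Nat.add_sub_cancel' hle, hN] at this
        exact h this.symm


lemma SyntaxSplitting.symm {Sig1 Sig2 : Set V} {Δ Δ1 Δ2 : Finset (CondRule V)}
    (h : SyntaxSplitting Sig1 Sig2 Δ Δ1 Δ2) : SyntaxSplitting Sig2 Sig1 Δ Δ2 Δ1 :=
  ⟨by rw [Set.union_comm]; exact h.1, h.2.1.symm, by rw [Finset.union_comm]; exact h.2.2.1,
   h.2.2.2.1.symm, h.2.2.2.2.2, h.2.2.2.2.1⟩

lemma tol_iff {Sig1 Sig2 : Set V} (hd : Disjoint Sig1 Sig2)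
    {S1 S2 : Finset (CondRule V)} {r : CondRule V}
    (hS1 : ∀ r' ∈ S1, condVars r' ⊆ Sig1) (hS2 : ∀ r' ∈ S2, condVars r' ⊆ Sig2)
    (hω2 : ∃ ω2 : V → Bool, ∀ r' ∈ S2, ¬ falsifies ω2 r') (hr : condVars r ⊆ Sig1) :
    Tolerated (S1 ∪ S2) r ↔ Tolerated S1 r := by
  constructor
  · rintro ⟨ω, hv, hf⟩
    exact ⟨ω, hv, fun r' hr' => hf r' (Finset.mem_union_left _ hr')⟩
  · rintro ⟨ω1, hv, hf⟩
    obtain ⟨ω2, hf2⟩ := hω2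
    refine ⟨combine Sig1 ω1 ω2, ?_, ?_⟩
    · exact (verifies_congr hr (combine_agree_left Sig1 ω1 ω2)).mpr hv
    · intro r' hr'
      rcases Finset.mem_union.mp hr' with h1 | h2
      · exact fun hfal =>
          hf r' h1 ((falsifies_congr (hS1 r' h1) (combine_agree_left Sig1 ω1 ω2)).mp hfal)
      · exact fun hfal =>
          hf2 r' h2 ((falsifies_congr (hS2 r' h2) (combine_agree_right hd ω1 ω2)).mp hfal)

section Split

variable {Sig1 Sig2 : Set V} {Δ Δ1 Δ2 : Finset (CondRule V)}
  (hsplit : SyntaxSplitting Sig1 Sig2 Δ Δ1 Δ2) (hcons : Consistent Δ)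

include hsplit hcons

lemma rest_eq : ∀ j, rest Δ j = rest Δ1 j ∪ rest Δ2 j := by
  intro j
  induction j with
  | zero => exact hsplit.2.2.1
  | succ j ih =>
      obtain ⟨ωnf, hωnf⟩ := exists_nonfalsifying hcons j
      have h1sub : rest Δ1 j ⊆ Δ1 := rest_subset Δ1 j
      have h2sub : rest Δ2 j ⊆ Δ2 := rest_subset Δ2 j
      have hv1 : ∀ r' ∈ rest Δ1 j, condVars r' ⊆ Sig1 := fun r' h => hsplit.2.2.2.2.1 r' (h1sub h)
      have hv2 : ∀ r' ∈ rest Δ2 j, condVars r' ⊆ Sig2 := fun r' h => hsplit.2.2.2.2.2 r' (h2sub h)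
      have hnf1 : ∃ ω : V → Bool, ∀ r' ∈ rest Δ1 j, ¬ falsifies ω r' :=
        ⟨ωnf, fun r' h => hωnf r' (ih ▸ Finset.mem_union_left _ h)⟩
      have hnf2 : ∃ ω : V → Bool, ∀ r' ∈ rest Δ2 j, ¬ falsifies ω r' :=
        ⟨ωnf, fun r' h => hωnf r' (ih ▸ Finset.mem_union_right _ h)⟩
      show (rest Δ j).filter _ = (rest Δ1 j).filter _ ∪ (rest Δ2 j).filter _
      rw [ih, Finset.filter_union]
      congr 1
      · apply Finset.filter_congr
        intro r hr
        simp only [eq_iff_iff, not_iff_not]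
        rw [tol_iff hsplit.2.1 hv1 hv2 hnf2 (hv1 r hr)]
      · apply Finset.filter_congr
        intro r hr
        simp only [eq_iff_iff, not_iff_not]
        rw [Finset.union_comm,
          tol_iff hsplit.2.1.symm hv2 hv1 hnf1 (hv2 r hr)]

lemma part_eq (j : ℕ) : part Δ j = part Δ1 j ∪ part Δ2 j := by
  obtain ⟨ωnf, hωnf⟩ := exists_nonfalsifying hcons j
  have ih := rest_eq hsplit hcons j
  have h1sub : rest Δ1 j ⊆ Δ1 := rest_subset Δ1 j
  have h2sub : rest Δ2 j ⊆ Δ2 := rest_subset Δ2 j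
  have hv1 : ∀ r' ∈ rest Δ1 j, condVars r' ⊆ Sig1 := fun r' h => hsplit.2.2.2.2.1 r' (h1sub h)
  have hv2 : ∀ r' ∈ rest Δ2 j, condVars r' ⊆ Sig2 := fun r' h => hsplit.2.2.2.2.2 r' (h2sub h)
  have hnf1 : ∃ ω : V → Bool, ∀ r' ∈ rest Δ1 j, ¬ falsifies ω r' :=
    ⟨ωnf, fun r' h => hωnf r' (ih ▸ Finset.mem_union_left _ h)⟩
  have hnf2 : ∃ ω : V → Bool, ∀ r' ∈ rest Δ2 j, ¬ falsifies ω r' :=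
    ⟨ωnf, fun r' h => hωnf r' (ih ▸ Finset.mem_union_right _ h)⟩
  show (rest Δ j).filter _ = (rest Δ1 j).filter _ ∪ (rest Δ2 j).filter _
  rw [ih, Finset.filter_union]
  congr 1
  · apply Finset.filter_congr
    intro r hr
    rw [tol_iff hsplit.2.1 hv1 hv2 hnf2 (hv1 r hr)]
  · apply Finset.filter_congr
    intro r hr
    rw [Finset.union_comm, tol_iff hsplit.2.1.symm hv2 hv1 hnf1 (hv2 r hr)]

lemma cons_left : Consistent Δ1 := by
  have hc := hcons
  obtain ⟨N, hN⟩ := hc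
  exact ⟨N, Finset.subset_empty.mp (by
    rw [rest_eq hsplit hcons N] at hN
    exact (Finset.union_eq_empty.mp hN).1 ▸ subset_rfl)⟩

lemma cons_right : Consistent Δ2 := by
  have hc := hcons
  obtain ⟨N, hN⟩ := hc
  exact ⟨N, (Finset.union_eq_empty.mp (by rw [← rest_eq hsplit hcons N]; exact hN)).2⟩

lemma fpart_eq (j : ℕ) (ω : V → Bool) : fpart Δ j ω = fpart Δ1 j ω ∪ fpart Δ2 j ω := by
  unfold fpart
  rw [part_eq hsplit hcons j, Finset.filter_union]

end Split

lemma part_subset {Δ : Finset (CondRule V)} (j : ℕ) : part Δ j ⊆ Δ :=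
  (Finset.filter_subset _ _).trans (rest_subset Δ j)

lemma fpart_subset {Δ : Finset (CondRule V)} (j : ℕ) (ω : V → Bool) : fpart Δ j ω ⊆ Δ :=
  (Finset.filter_subset _ _).trans (part_subset j)

lemma fpart_congr {Sig : Set V} {Δ : Finset (CondRule V)} (hv : ∀ r ∈ Δ, condVars r ⊆ Sig)
    {ω ω' : V → Bool} (h : ∀ v ∈ Sig, ω v = ω' v) (j : ℕ) : fpart Δ j ω = fpart Δ j ω' := by
  unfold fpart
  apply Finset.filter_congr
  intro r hr
  exact falsifies_congr (hv r (part_subset j hr)) h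


-- ### disjoint union decomposition helpers

lemma du_subset {α : Type*} [DecidableEq α] {Δ1 Δ2 A A' B B' : Finset α} (hd : Disjoint Δ1 Δ2)
    (hA : A ⊆ Δ1) (hA' : A' ⊆ Δ1) (hB : B ⊆ Δ2) (hB' : B' ⊆ Δ2)
    (h : A ∪ B ⊆ A' ∪ B') : A ⊆ A' ∧ B ⊆ B' := by
  constructor
  · intro x hx
    rcases Finset.mem_union.mp (h (Finset.mem_union_left _ hx)) with h1 | h2
    · exact h1
    · exact absurd (hB' h2) (Finset.disjoint_left.mp hd (hA hx))
  · intro x hx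
    rcases Finset.mem_union.mp (h (Finset.mem_union_right _ hx)) with h1 | h2
    · exact absurd (hA' h1) (Finset.disjoint_right.mp hd (hB hx))
    · exact h2

lemma du_eq {α : Type*} [DecidableEq α] {Δ1 Δ2 A A' B B' : Finset α} (hd : Disjoint Δ1 Δ2)
    (hA : A ⊆ Δ1) (hA' : A' ⊆ Δ1) (hB : B ⊆ Δ2) (hB' : B' ⊆ Δ2)
    (h : A ∪ B = A' ∪ B') : A = A' ∧ B = B' := by
  obtain ⟨h1, h2⟩ := du_subset hd hA hA' hB hB' (le_of_eq h)
  obtain ⟨h3, h4⟩ := du_subset hd hA' hA hB' hB (le_of_eq h.symm)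
  exact ⟨le_antisymm h1 h3, le_antisymm h2 h4⟩

lemma du_ssubset {α : Type*} [DecidableEq α] {Δ1 Δ2 A A' B B' : Finset α} (hd : Disjoint Δ1 Δ2)
    (hA' : A' ⊆ Δ1) (hB : B ⊆ Δ2) (hAs : A ⊂ A') (hBs : B ⊆ B') : A ∪ B ⊂ A' ∪ B' := by
  refine ⟨Finset.union_subset_union hAs.subset hBs, fun hsup => ?_⟩
  obtain ⟨x, hx', hx⟩ := Finset.exists_of_ssubset hAs
  rcases Finset.mem_union.mp (hsup (Finset.mem_union_left _ hx')) with h1 | h2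
  · exact hx h1
  · exact Finset.disjoint_left.mp hd (hA' hx') (hB h2)

lemma du_ssubset' {α : Type*} [DecidableEq α] {Δ1 Δ2 A A' B B' : Finset α} (hd : Disjoint Δ1 Δ2)
    (hA : A ⊆ Δ1) (hB' : B' ⊆ Δ2) (hAs : A ⊆ A') (hBs : B ⊂ B') : A ∪ B ⊂ A' ∪ B' := by
  rw [Finset.union_comm A B, Finset.union_comm A' B']
  exact du_ssubset hd.symm hB' hA hBs hAs

section Split2

variable {Sig1 Sig2 : Set V} {Δ Δ1 Δ2 : Finset (CondRule V)}
  (hsplit : SyntaxSplitting Sig1 Sig2 Δ Δ1 Δ2) (hcons : Consistent Δ)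

include hsplit hcons

lemma prefRel_decomp {ω ω' : V → Bool} (h : prefRel Δ ω ω') :
    ∃ m : ℕ, (∀ i, m < i → fpart Δ1 i ω = fpart Δ1 i ω' ∧ fpart Δ2 i ω = fpart Δ2 i ω') ∧
      fpart Δ1 m ω ⊆ fpart Δ1 m ω' ∧ fpart Δ2 m ω ⊆ fpart Δ2 m ω' ∧
      (fpart Δ1 m ω ⊂ fpart Δ1 m ω' ∨ fpart Δ2 m ω ⊂ fpart Δ2 m ω') := by
  obtain ⟨m, heq, hlt⟩ := h
  have hd := hsplit.2.2.2.1
  refine ⟨m, ?_, ?_⟩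
  · intro i hi
    have := heq i hi
    rw [fpart_eq hsplit hcons i ω, fpart_eq hsplit hcons i ω'] at this
    exact du_eq hd (fpart_subset i ω) (fpart_subset i ω') (fpart_subset i ω)
      (fpart_subset i ω') this
  · rw [fpart_eq hsplit hcons m ω, fpart_eq hsplit hcons m ω'] at hlt
    obtain ⟨h1, h2⟩ := du_subset hd (fpart_subset m ω) (fpart_subset m ω')
      (fpart_subset m ω) (fpart_subset m ω') hlt.1
    refine ⟨h1, h2, ?_⟩
    by_contra hcon
    push_neg at hcon
    have e1 : fpart Δ1 m ω = fpart Δ1 m ω' := le_antisymm h1 (by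
      by_contra hx
      exact (hcon.1 ⟨h1, hx⟩))
    have e2 : fpart Δ2 m ω = fpart Δ2 m ω' := le_antisymm h2 (by
      by_contra hx
      exact (hcon.2 ⟨h2, hx⟩))
    exact hlt.ne (by rw [e1, e2])

lemma prefRel_comp_left {ω ω' : V → Bool} (m : ℕ)
    (h1 : ∀ i, m < i → fpart Δ1 i ω = fpart Δ1 i ω')
    (h2 : ∀ i, m < i → fpart Δ2 i ω = fpart Δ2 i ω')
    (h3 : fpart Δ1 m ω ⊂ fpart Δ1 m ω') (h4 : fpart Δ2 m ω ⊆ fpart Δ2 m ω') :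
    prefRel Δ ω ω' := by
  refine ⟨m, fun i hi => ?_, ?_⟩
  · rw [fpart_eq hsplit hcons i ω, fpart_eq hsplit hcons i ω', h1 i hi, h2 i hi]
  · rw [fpart_eq hsplit hcons m ω, fpart_eq hsplit hcons m ω']
    exact du_ssubset hsplit.2.2.2.1 (fpart_subset m ω') (fpart_subset m ω) h3 h4

end Split2

-- ### a numeric rank compatible with the preferred structure

noncomputable def rank (Δ : Finset (CondRule V)) (N : ℕ) (ω : V → Bool) : ℕ :=
  ∑ j ∈ Finset.range N, (Δ.card + 1)^j * (fpart Δ j ω).card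

lemma geom_bound (B : ℕ) : ∀ m : ℕ, ∑ j ∈ Finset.range m, (B+1)^j * B < (B+1)^m := by
  intro m
  induction m with
  | zero => simp
  | succ m ih =>
      rw [Finset.sum_range_succ, pow_succ]
      calc ∑ j ∈ Finset.range m, (B+1)^j * B + (B+1)^m * B
          < (B+1)^m + (B+1)^m * B := by omega
        _ = (B+1)^m * (B+1) := by ring

lemma rank_lt {Δ : Finset (CondRule V)} {N : ℕ} (hN : rest Δ N = ∅) {ω ω' : V → Bool}
    (h : prefRel Δ ω ω') : rank Δ N ω < rank Δ N ω' := by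
  obtain ⟨m, heq, hlt⟩ := h
  have hm : m < N := by
    by_contra hx
    push_neg at hx
    have : fpart Δ m ω' = ∅ := Finset.subset_empty.mp (by
      refine ((Finset.filter_subset _ _).trans ((Finset.filter_subset _ _).trans ?_))
      exact (rest_antitone Δ hx).trans (le_of_eq hN))
    rw [this] at hlt
    exact (Finset.not_ssubset_empty _) hlt
  set c := Δ.card + 1 with hc
  have hcard : ∀ (ω : V → Bool) (j : ℕ), (fpart Δ j ω).card ≤ Δ.card :=
    fun ω j => Finset.card_le_card (fpart_subset j ω)
  have hsum : ∀ ω'' : V → Bool, rank Δ N ω'' =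
      ∑ j ∈ Finset.range (m+1), c^j * (fpart Δ j ω'').card +
      ∑ j ∈ Finset.Ico (m+1) N, c^j * (fpart Δ j ω'').card := by
    intro ω''
    rw [rank, ← Finset.sum_range_add_sum_Ico _ hm]
  have htail : ∑ j ∈ Finset.Ico (m+1) N, c^j * (fpart Δ j ω).card =
      ∑ j ∈ Finset.Ico (m+1) N, c^j * (fpart Δ j ω').card := by
    apply Finset.sum_congr rfl
    intro j hj
    rw [heq j (Finset.mem_Ico.mp hj).1]
  have hhead : ∑ j ∈ Finset.range (m+1), c^j * (fpart Δ j ω).card <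
      ∑ j ∈ Finset.range (m+1), c^j * (fpart Δ j ω').card := by
    have h1 : ∑ j ∈ Finset.range m, c^j * (fpart Δ j ω).card < c^m := by
      calc ∑ j ∈ Finset.range m, c^j * (fpart Δ j ω).card
          ≤ ∑ j ∈ Finset.range m, c^j * Δ.card :=
            Finset.sum_le_sum (fun j _ => Nat.mul_le_mul_left _ (hcard ω j))
        _ < c^m := geom_bound Δ.card m
    have h2 : (fpart Δ m ω).card < (fpart Δ m ω').card := Finset.card_lt_card hlt
    have h3 : c^m * (fpart Δ m ω').card ≤
        ∑ j ∈ Finset.range (m+1), c^j * (fpart Δ j ω').card :=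
      Finset.single_le_sum (f := fun j => c^j * (fpart Δ j ω').card)
        (fun j _ => Nat.zero_le _) (Finset.self_mem_range_succ m)
    rw [Finset.sum_range_succ]
    calc ∑ j ∈ Finset.range m, c^j * (fpart Δ j ω).card + c^m * (fpart Δ m ω).card
        < c^m + c^m * (fpart Δ m ω).card := by omega
      _ = c^m * ((fpart Δ m ω).card + 1) := by ring
      _ ≤ c^m * (fpart Δ m ω').card := Nat.mul_le_mul_left _ (by omega)
      _ ≤ _ := h3
  rw [hsum ω, hsum ω', htail]
  omega


section Main

variable [Fintype V] {Sig1 Sig2 : Set V} {Δ Δ1 Δ2 : Finset (CondRule V)}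
  (hsplit : SyntaxSplitting Sig1 Sig2 Δ Δ1 Δ2) (hcons : Consistent Δ)

include hsplit hcons

lemma fpart_combine_left (i : ℕ) (ω1 ω2 : V → Bool) :
    fpart Δ1 i (combine Sig1 ω1 ω2) = fpart Δ1 i ω1 :=
  fpart_congr hsplit.2.2.2.2.1 (combine_agree_left Sig1 ω1 ω2) i

lemma fpart_combine_right (i : ℕ) (ω1 ω2 : V → Bool) :
    fpart Δ2 i (combine Sig1 ω1 ω2) = fpart Δ2 i ω2 :=
  fpart_congr hsplit.2.2.2.2.2 (combine_agree_right hsplit.2.1 ω1 ω2) i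

/-- Lifting a `Δ1`-preference to a `Δ`-preference by recombining worlds. -/
lemma pref_lift {ω ω' : V → Bool} (h : prefRel Δ1 ω ω') :
    prefRel Δ (combine Sig1 ω ω') ω' := by
  obtain ⟨m, heq, hlt⟩ := h
  apply prefRel_comp_left hsplit hcons m
  · intro i hi
    rw [fpart_combine_left hsplit hcons]
    exact heq i hi
  · intro i hi
    rw [fpart_combine_right hsplit hcons]
  · rw [fpart_combine_left hsplit hcons]
    exact hlt
  · rw [fpart_combine_right hsplit hcons]

omit hcons in
lemma fpart_right_empty {ω0 : V → Bool} (hf : ∀ r ∈ Δ2, ¬ falsifies ω0 r) (i : ℕ) :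
    fpart Δ2 i ω0 = ∅ := by
  unfold fpart
  rw [Finset.filter_false_of_mem]
  intro r hr
  exact hf r (part_subset i hr)

/-- (Rel) for the first component. -/
lemma rel_left (A B : PForm V) (hA : A.vars ⊆ Sig1) (hB : B.vars ⊆ Sig1) :
    SysWInf Δ A B ↔ SysWInf Δ1 A B := by
  constructor
  · intro h ω' ⟨hA', hB'⟩
    obtain ⟨ω2s, hω2s⟩ := exists_nonfalsifying (cons_right hsplit hcons) 0
    have hω2s' : ∀ r ∈ Δ2, ¬ falsifies ω2s r := hω2s
    set ω'' := combine Sig1 ω' ω2s with hw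
    have eA : A.eval ω'' = A.eval ω' := eval_congr_subset A hA (combine_agree_left _ _ _)
    have eB : B.eval ω'' = B.eval ω' := eval_congr_subset B hB (combine_agree_left _ _ _)
    obtain ⟨ω, ⟨hAω, hBω⟩, hpref⟩ := h ω'' ⟨eA.trans hA', eB.trans hB'⟩
    obtain ⟨m, heq, hs1, hs2, hcase⟩ := prefRel_decomp hsplit hcons hpref
    have hzero : ∀ i, fpart Δ2 i ω'' = ∅ := by
      intro i
      rw [hw, fpart_combine_right hsplit hcons, fpart_right_empty hsplit hω2s']
    rcases hcase with hc | hc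
    · refine ⟨ω, ⟨hAω, hBω⟩, m, ?_, ?_⟩
      · intro i hi
        rw [(heq i hi).1, hw, fpart_combine_left hsplit hcons]
      · rw [hw, fpart_combine_left hsplit hcons] at hc
        exact hc
    · rw [hzero m] at hc
      exact absurd hc (Finset.not_ssubset_empty _)
  · intro h ω' ⟨hA', hB'⟩
    obtain ⟨ω, ⟨hAω, hBω⟩, hpref⟩ := h ω' ⟨hA', hB'⟩
    refine ⟨combine Sig1 ω ω', ⟨?_, ?_⟩, pref_lift hsplit hcons hpref⟩
    · exact (eval_congr_subset A hA (combine_agree_left _ _ _)).trans hAω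
    · exact (eval_congr_subset B hB (combine_agree_left _ _ _)).trans hBω

/-- (Ind) for the first component. -/
lemma ind_left (A B D : PForm V) (hA : A.vars ⊆ Sig1) (hB : B.vars ⊆ Sig1)
    (hD : D.vars ⊆ Sig2) (hDsat : ∃ ω : V → Bool, D.eval ω = true) :
    SysWInf Δ A B ↔ SysWInf Δ (PForm.conj A D) B := by
  rw [rel_left hsplit hcons A B hA hB]
  constructor
  · -- from `Δ1` inference to the conjoined query
    intro h ω' ⟨hAD', hB'⟩
    rw [show (PForm.conj A D).eval ω' = (A.eval ω' && D.eval ω') from rfl,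
      Bool.and_eq_true] at hAD'
    obtain ⟨ω, ⟨hAω, hBω⟩, hpref⟩ := h ω' ⟨hAD'.1, hB'⟩
    refine ⟨combine Sig1 ω ω', ⟨?_, ?_⟩, pref_lift hsplit hcons hpref⟩
    · show (A.eval _ && D.eval _) = true
      rw [Bool.and_eq_true]
      exact ⟨(eval_congr_subset A hA (combine_agree_left _ _ _)).trans hAω,
        (eval_congr_subset D hD (combine_agree_right hsplit.2.1 _ _)).trans hAD'.2⟩
    · exact (eval_congr_subset B hB (combine_agree_left _ _ _)).trans hBω
  · -- from the conjoined query back to `Δ1` inference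
    intro h ω' ⟨hA', hB'⟩
    haveI := Classical.decEq V
    obtain ⟨N2, hN2⟩ := cons_right hsplit hcons
    obtain ⟨ωD, hωD⟩ := hDsat
    have hDne : (Finset.univ.filter (fun ω : V → Bool => D.eval ω = true)).Nonempty :=
      ⟨ωD, Finset.mem_filter.mpr ⟨Finset.mem_univ _, hωD⟩⟩
    obtain ⟨ω2, hω2mem, hω2min⟩ := Finset.exists_min_image _ (rank Δ2 N2) hDne
    have hω2D : D.eval ω2 = true := (Finset.mem_filter.mp hω2mem).2
    set ω'' := combine Sig1 ω' ω2 with hw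
    have eAD : (PForm.conj A D).eval ω'' = true := by
      show (A.eval _ && D.eval _) = true
      rw [Bool.and_eq_true]
      exact ⟨(eval_congr_subset A hA (combine_agree_left _ _ _)).trans hA',
        (eval_congr_subset D hD (combine_agree_right hsplit.2.1 _ _)).trans hω2D⟩
    have eB : B.eval ω'' = false :=
      (eval_congr_subset B hB (combine_agree_left _ _ _)).trans hB'
    obtain ⟨ω, ⟨hADω, hBω⟩, hpref⟩ := h ω'' ⟨eAD, eB⟩
    rw [show (PForm.conj A D).eval ω = (A.eval ω && D.eval ω) from rfl,
      Bool.and_eq_true] at hADω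
    obtain ⟨m, heq, hs1, hs2, hcase⟩ := prefRel_decomp hsplit hcons hpref
    rcases hcase with hc | hc
    · refine ⟨ω, ⟨hADω.1, hBω⟩, m, ?_, ?_⟩
      · intro i hi
        rw [(heq i hi).1, hw, fpart_combine_left hsplit hcons]
      · rw [hw, fpart_combine_left hsplit hcons] at hc
        exact hc
    · exfalso
      have hpref2 : prefRel Δ2 ω ω2 := by
        refine ⟨m, fun i hi => ?_, ?_⟩
        · rw [(heq i hi).2, hw, fpart_combine_right hsplit hcons]
        · rw [hw, fpart_combine_right hsplit hcons] at hc
          exact hc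
      have hlt := rank_lt hN2 hpref2
      have hge := hω2min ω (Finset.mem_filter.mpr ⟨Finset.mem_univ _, hADω.2⟩)
      omega

end Main

end SysW

open SysW in
/-- System W satisfies (SynSplit), i.e. both (Rel) and (Ind), for any
consistent belief base `Δ = Δ1 ∪_{Σ1,Σ2} Δ2` with syntax splitting. -/
theorem stmt8 {V : Type} [Fintype V] (Sig1 Sig2 : Set V) (Δ Δ1 Δ2 : Finset (CondRule V))
    (hsplit : SyntaxSplitting Sig1 Sig2 Δ Δ1 Δ2) (hcons : Consistent Δ) :
    ((∀ A B : PForm V, A.vars ⊆ Sig1 → B.vars ⊆ Sig1 → (SysWInf Δ A B ↔ SysWInf Δ1 A B)) ∧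
     (∀ A B : PForm V, A.vars ⊆ Sig2 → B.vars ⊆ Sig2 → (SysWInf Δ A B ↔ SysWInf Δ2 A B))) ∧
    ((∀ A B D : PForm V, A.vars ⊆ Sig1 → B.vars ⊆ Sig1 → D.vars ⊆ Sig2 →
       (∃ ω : V → Bool, D.eval ω = true) →
       (SysWInf Δ A B ↔ SysWInf Δ (PForm.conj A D) B)) ∧
     (∀ A B D : PForm V, A.vars ⊆ Sig2 → B.vars ⊆ Sig2 → D.vars ⊆ Sig1 →
       (∃ ω : V → Bool, D.eval ω = true) →
       (SysWInf Δ A B ↔ SysWInf Δ (PForm.conj A D) B))) := by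
  exact ⟨⟨fun A B hA hB => rel_left hsplit hcons A B hA hB,
          fun A B hA hB => rel_left hsplit.symm hcons A B hA hB⟩,
         ⟨fun A B D hA hB hD hDs => ind_left hsplit hcons A B D hA hB hD hDs,
          fun A B D hA hB hD hDs => ind_left hsplit.symm hcons A B D hA hB hD hDs⟩⟩
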